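/- The asymptotic consumption-wealth ratio function G(z) = κ²(m₁−1)(m₁−γ*)(m₂−γ*) / (2((1−γ*)z^{m₁−1} − m₁ + γ*)) is positive and strictly increasing on (0, 1], and G(1) = −(κ²/2)(m₁−γ*)(m₂−γ*) = K₀, the optimal consumption-wealth ratio of the classical Merton problem. -/
import Mathlib


/-- The asymptotic consumption-wealth ratio function
`G(z) = κ²(m₁−1)(m₁−γ*)(m₂−γ*) / (2((1−γ*)z^{m₁−1} − m₁ + γ*))`. -/
noncomputable def Gratio (κ γ m₁ m₂ : ℝ) (z : ℝ) : ℝ :=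
  κ ^ 2 * (m₁ - 1) * (m₁ - (γ - 1) / γ) * (m₂ - (γ - 1) / γ) /
    (2 * ((1 - (γ - 1) / γ) * z ^ (m₁ - 1) - m₁ + (γ - 1) / γ))

set_option maxHeartbeats 1000000 in
/-- `G` is positive and strictly increasing on `(0, 1]`, and
`G(1) = −(κ²/2)(m₁−γ*)(m₂−γ*) = K₀`, the optimal consumption-wealth ratio of the
classical Merton problem. -/
theorem Gratio_pos_strictMono (r δ κ γ m₁ m₂ : ℝ)
    (hr : 0 < r) (hδ : 0 < δ) (hκ : 0 < κ) (hγ : 0 < γ) (hγ1 : γ ≠ 1)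
    (hK : 0 < r + (δ - r) / γ + ((γ - 1) / (2 * γ ^ 2)) * κ ^ 2)
    (hQ1 : κ ^ 2 / 2 * m₁ ^ 2 + (δ - r - κ ^ 2 / 2) * m₁ - δ = 0)
    (hQ2 : κ ^ 2 / 2 * m₂ ^ 2 + (δ - r - κ ^ 2 / 2) * m₂ - δ = 0)
    (hm1 : 1 < m₁) (hm2 : m₂ < min ((γ - 1) / γ) 0) :
    (∀ z ∈ Set.Ioc (0 : ℝ) 1, 0 < Gratio κ γ m₁ m₂ z) ∧
    StrictMonoOn (Gratio κ γ m₁ m₂) (Set.Ioc 0 1) ∧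
    Gratio κ γ m₁ m₂ 1 = -(κ ^ 2 / 2) * (m₁ - (γ - 1) / γ) * (m₂ - (γ - 1) / γ) ∧
    -(κ ^ 2 / 2) * (m₁ - (γ - 1) / γ) * (m₂ - (γ - 1) / γ)
      = r + (δ - r) / γ + ((γ - 1) / (2 * γ ^ 2)) * κ ^ 2 := by
  have hγ0 : γ ≠ 0 := ne_of_gt hγ
  have hgs1 : (γ - 1) / γ < 1 := by rw [div_lt_one hγ]; linarith
  have hm2gs : m₂ < (γ - 1) / γ := lt_of_lt_of_le hm2 (min_le_left _ _)
  have hm2neg : m₂ < 0 := lt_of_lt_of_le hm2 (min_le_right _ _)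
  have hκ2 : 0 < κ ^ 2 := by positivity
  -- numerator is negative
  have hN : κ ^ 2 * (m₁ - 1) * (m₁ - (γ - 1) / γ) * (m₂ - (γ - 1) / γ) < 0 := by
    have h2 : 0 < m₁ - 1 := by linarith
    have h3 : 0 < m₁ - (γ - 1) / γ := by linarith
    have h4 : m₂ - (γ - 1) / γ < 0 := by linarith
    have := mul_pos (mul_pos hκ2 h2) h3
    nlinarith
  -- denominator is negative on (0,1]
  have hD : ∀ z ∈ Set.Ioc (0 : ℝ) 1,
      2 * ((1 - (γ - 1) / γ) * z ^ (m₁ - 1) - m₁ + (γ - 1) / γ) < 0 := by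
    intro z hz
    have hzpow : z ^ (m₁ - 1) ≤ 1 := Real.rpow_le_one hz.1.le hz.2 (by linarith)
    have h1gs : 0 < 1 - (γ - 1) / γ := by linarith
    nlinarith [mul_le_mul_of_nonneg_left hzpow h1gs.le]
  refine ⟨?_, ?_, ?_, ?_⟩
  · intro z hz
    exact div_pos_of_neg_of_neg hN (hD z hz)
  · intro z₁ hz₁ z₂ hz₂ hlt
    have hD₁ := hD z₁ hz₁
    have hD₂ := hD z₂ hz₂
    have hpowlt : z₁ ^ (m₁ - 1) < z₂ ^ (m₁ - 1) :=
      Real.rpow_lt_rpow hz₁.1.le hlt (by linarith)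
    have h1gs : 0 < 1 - (γ - 1) / γ := by linarith
    have hDlt : 2 * ((1 - (γ - 1) / γ) * z₁ ^ (m₁ - 1) - m₁ + (γ - 1) / γ) <
        2 * ((1 - (γ - 1) / γ) * z₂ ^ (m₁ - 1) - m₁ + (γ - 1) / γ) := by
      nlinarith [mul_lt_mul_of_pos_left hpowlt h1gs]
    have key :
        (-(κ ^ 2 * (m₁ - 1) * (m₁ - (γ - 1) / γ) * (m₂ - (γ - 1) / γ))) /
          (-(2 * ((1 - (γ - 1) / γ) * z₁ ^ (m₁ - 1) - m₁ + (γ - 1) / γ))) <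
        (-(κ ^ 2 * (m₁ - 1) * (m₁ - (γ - 1) / γ) * (m₂ - (γ - 1) / γ))) /
          (-(2 * ((1 - (γ - 1) / γ) * z₂ ^ (m₁ - 1) - m₁ + (γ - 1) / γ))) :=
      div_lt_div_of_pos_left (by linarith) (by linarith) (by linarith)
    rw [neg_div_neg_eq, neg_div_neg_eq] at key
    exact key
  · unfold Gratio
    rw [Real.one_rpow]
    have hd2 : (2 : ℝ) * ((1 - (γ - 1) / γ) * 1 - m₁ + (γ - 1) / γ) = 2 * (1 - m₁) := by
      ring
    rw [hd2, div_eq_iff (by intro h; nlinarith : (2 : ℝ) * (1 - m₁) ≠ 0)]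
    ring
  · -- Vieta
    have hsum : κ ^ 2 / 2 * (m₁ + m₂) + (δ - r - κ ^ 2 / 2) = 0 := by
      have h : (m₁ - m₂) * (κ ^ 2 / 2 * (m₁ + m₂) + (δ - r - κ ^ 2 / 2)) = 0 := by
        linear_combination hQ1 - hQ2
      rcases mul_eq_zero.mp h with h' | h'
      · exact absurd h' (by intro h''; nlinarith)
      · exact h'
    have hprod : κ ^ 2 / 2 * (m₁ * m₂) + δ = 0 := by
      linear_combination m₁ * hsum - hQ1
    have hgsQ : -(κ ^ 2 / 2 * ((γ - 1) / γ) ^ 2 + (δ - r - κ ^ 2 / 2) * ((γ - 1) / γ) - δ)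
        = r + (δ - r) / γ + ((γ - 1) / (2 * γ ^ 2)) * κ ^ 2 := by
      field_simp
      ring
    have hfac : -(κ ^ 2 / 2) * (m₁ - (γ - 1) / γ) * (m₂ - (γ - 1) / γ)
        = -(κ ^ 2 / 2 * ((γ - 1) / γ) ^ 2 + (δ - r - κ ^ 2 / 2) * ((γ - 1) / γ) - δ) := by
      linear_combination ((γ - 1) / γ) * hsum - hprod
    rw [hfac, hgsQ]
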